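/- The subgames T1 and T2 partition the set of arrival pairs and are fully independent with respect to the players' information: T1 ∩ T2 = ∅, T1 ∪ T2 = T, and no arrival pair in T1 is indistinguishable from an arrival pair in T2 for either player, i.e., for all (t1, t2) ∈ T1 and (t1', t2') ∈ T2, it holds that t1 ≠ t1' and t2 ≠ t2'. -/

import Mathlib

/-- The two actions: `c` (canteen) and `o` (office). -/
inductive Act : Type
  | c : Act
  | o : Act
deriving DecidableEq

open Act

/-- The set of arrival pairs
`T = {(k, k+1) : kmin ≤ k ≤ kmax - 1} ∪ {(k, k-1) : kmin + 1 ≤ k ≤ kmax}`. -/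
noncomputable def T (kmin kmax : ℤ) : Finset (ℤ × ℤ) :=
  ((Finset.Icc kmin (kmax - 1)).image (fun k => (k, k + 1))) ∪
  ((Finset.Icc (kmin + 1) kmax).image (fun k => (k, k - 1)))

/-- Subgame `T1 = {(t1,t2) ∈ T : t1 ≡ kmin (mod 2)}`. -/
noncomputable def T1 (kmin kmax : ℤ) : Finset (ℤ × ℤ) :=
  (T kmin kmax).filter (fun t => t.1 % 2 = kmin % 2)

/-- Subgame `T2 = {(t1,t2) ∈ T : t2 ≡ kmin (mod 2)}`. -/
noncomputable def T2 (kmin kmax : ℤ) : Finset (ℤ × ℤ) :=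
  (T kmin kmax).filter (fun t => t.2 % 2 = kmin % 2)

/-- The expected utility of profile `s` over a set `S` of arrival pairs:
`EU_S(s) = (1/|S|) · Σ_{(t1,t2) ∈ S} u_{(t1,t2)}(s_1(t1), s_2(t2))`. -/
noncomputable def EU (u : ℤ × ℤ → Act → Act → ℝ) (s : (ℤ → Act) × (ℤ → Act))
    (S : Finset (ℤ × ℤ)) : ℝ :=
  (∑ t ∈ S, u t (s.1 t.1) (s.2 t.2)) / S.card

/-- `s` is Pareto optimal over `S` if no profile `s'` has `EU_S(s') > EU_S(s)`. -/
def ParetoOptimal (u : ℤ × ℤ → Act → Act → ℝ) (S : Finset (ℤ × ℤ))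
    (s : (ℤ → Act) × (ℤ → Act)) : Prop :=
  ¬ ∃ s' : (ℤ → Act) × (ℤ → Act), EU u s' S > EU u s S

/-- `u` satisfies conditions (U1) and (U2) on the arrival pairs of `T`. -/
def SatisfiesU1U2 (kmin kmax N : ℤ) (u : ℤ × ℤ → Act → Act → ℝ) : Prop :=
  ∀ t ∈ T kmin kmax,
    (t.1 < N ∧ t.2 < N →
      u t c c > u t o o ∧ u t o o > u t c o ∧ u t c o = u t o c) ∧
    (N ≤ t.1 ∨ N ≤ t.2 →
      u t o o > u t c o ∧ u t c o = u t o c ∧ u t o c = u t c c)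

/-- `u` is uniform with values `A > B > C` (the order is assumed separately). -/
def Uniform (kmin kmax N : ℤ) (u : ℤ × ℤ → Act → Act → ℝ) (A B C : ℝ) : Prop :=
  ∀ t ∈ T kmin kmax,
    (t.1 < N ∧ t.2 < N →
      u t c c = A ∧ u t o o = B ∧ u t c o = C ∧ u t o c = C) ∧
    (N ≤ t.1 ∨ N ≤ t.2 →
      u t o o = B ∧ u t c c = C ∧ u t c o = C ∧ u t o c = C)

/-- The cut-off strategy with cut-off `m`: canteen iff arriving strictly before `m`. -/
def cutoff (m : ℤ) : ℤ → Act := fun k => if k < m then c else o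

/-- The all-office strategy. -/
def allOffice : ℤ → Act := fun _ => o

lemma snd_eq_fst_add_one_or_fst_sub_one_of_mem_T {kmin kmax : ℤ} {t : ℤ × ℤ}
    (ht : t ∈ T kmin kmax) : t.2 = t.1 + 1 ∨ t.2 = t.1 - 1 := by
  simp only [T, Finset.mem_union, Finset.mem_image] at ht
  rcases ht with ⟨k, -, rfl⟩ | ⟨k, -, rfl⟩
  exacts [Or.inl rfl, Or.inr rfl]

lemma snd_mod_two_eq_iff_fst_mod_two_ne_of_mem_T {kmin kmax : ℤ} {t : ℤ × ℤ}
    (ht : t ∈ T kmin kmax) : t.2 % 2 = kmin % 2 ↔ t.1 % 2 ≠ kmin % 2 := by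
  rcases snd_eq_fst_add_one_or_fst_sub_one_of_mem_T ht with h | h <;> omega

lemma mem_T2_iff_notMem_T1 {kmin kmax : ℤ} {t : ℤ × ℤ} (ht : t ∈ T kmin kmax) :
    t ∈ T2 kmin kmax ↔ t ∉ T1 kmin kmax := by
  simp only [T1, T2, Finset.mem_filter, ht, true_and]
  exact snd_mod_two_eq_iff_fst_mod_two_ne_of_mem_T ht

theorem stmt_5_general (kmin kmax : ℤ) :
    (T1 kmin kmax ∩ T2 kmin kmax = ∅) ∧
    (T1 kmin kmax ∪ T2 kmin kmax = T kmin kmax) ∧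
    (∀ t ∈ T1 kmin kmax, ∀ t' ∈ T2 kmin kmax, t.1 ≠ t'.1 ∧ t.2 ≠ t'.2) := by
  refine ⟨?_, ?_, ?_⟩
  · refine Finset.disjoint_iff_inter_eq_empty.mp (Finset.disjoint_left.mpr fun t h₁ h₂ => ?_)
    exact (mem_T2_iff_notMem_T1 (Finset.mem_of_mem_filter t h₁)).mp h₂ h₁
  · refine subset_antisymm (Finset.union_subset (Finset.filter_subset _ _)
      (Finset.filter_subset _ _)) fun t ht => ?_
    rw [Finset.mem_union, mem_T2_iff_notMem_T1 ht]
    exact em _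
  · intro t ht₁ t' ht'₂
    obtain ⟨ht, ht_fst⟩ := Finset.mem_filter.mp ht₁
    obtain ⟨ht', ht'_snd⟩ := Finset.mem_filter.mp ht'₂
    have ht_snd : t.2 % 2 ≠ kmin % 2 := fun h =>
      (snd_mod_two_eq_iff_fst_mod_two_ne_of_mem_T ht).mp h ht_fst
    have ht'_fst : t'.1 % 2 ≠ kmin % 2 :=
      (snd_mod_two_eq_iff_fst_mod_two_ne_of_mem_T ht').mp ht'_snd
    exact ⟨fun h => ht'_fst (h ▸ ht_fst), fun h => ht_snd (h ▸ ht'_snd)⟩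

/-- `T1` and `T2` partition `T` and are fully independent with respect to
the players' information. -/
theorem stmt_5 (kmin kmax N : ℤ) (h1 : kmin < N) (h2 : N ≤ kmax) :
    (T1 kmin kmax ∩ T2 kmin kmax = ∅) ∧
    (T1 kmin kmax ∪ T2 kmin kmax = T kmin kmax) ∧
    (∀ t ∈ T1 kmin kmax, ∀ t' ∈ T2 kmin kmax, t.1 ≠ t'.1 ∧ t.2 ≠ t'.2) :=
  stmt_5_general kmin kmax
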